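/- arXiv:1111.5786 — 7 statements merged into one kernel-verified Lean document; each statement's English description precedes it below -/
import Mathlib

section
/- A quadratic polynomial f ∈ ℤ[x] is intersective (i.e., has a root modulo q for every positive integer q) if and only if f can be written as f(x) = a(αx + β)(γx + λ) with integers a, α, β, γ, λ satisfying gcd(α,β) = gcd(γ,λ) = gcd(α,γ) = 1. -/
/-
Write `f = A x² + B x + C` with discriminant `D`. A root of `f` modulo `q` gives
`(2 A n + B)² ≡ D (mod q)`, since `(2 A x + B)² - D = 4 A f(x)`. Modulo `4 D²` this forces `D` to
be a square: with `D = s² t`, `t` squarefree, one gets `t ∣ x / s`, hence `t² ∣ t`, so `t = ±1`,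
and `t = -1` is impossible modulo `4`. Then `4 A f = (2 A x + B - d)(2 A x + B + d)`, and after
dividing out the contents of the two linear factors Gauss's lemma gives `f = a (αx + β)(γx + λ)`
with both factors primitive. A common prime `p` of `α` and `γ` would divide neither factor at any
integer, so `f` would have no root modulo `p a`.

Conversely, roots modulo coprime moduli glue by the Chinese remainder theorem, and modulo a prime
power `p^k` one of `α`, `γ` is invertible since `p` does not divide both, so the corresponding
linear factor has a root.
-/

open Polynomial

namespace Int

lemma exists_sq_mul_squarefree (D : ℤ) : ∃ s t : ℤ, D = s ^ 2 * t ∧ Squarefree t := by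
  obtain ⟨t, s, hst, ht⟩ := Nat.sq_mul_squarefree D.natAbs
  rcases D.natAbs_eq with hD | hD
  · exact ⟨s, t, by rw [hD, ← hst]; push_cast; ring, squarefree_natCast.mpr ht⟩
  · exact ⟨s, -t, by rw [hD, ← hst]; push_cast; ring, squarefree_natAbs.mp (by simpa using ht)⟩

lemma eq_one_of_squarefree_of_four_mul_sq_dvd {t y : ℤ} (ht : Squarefree t)
    (h : 4 * t ^ 2 ∣ y ^ 2 - t) : t = 1 := by
  have hty : t ∣ y := (ht.dvd_pow_iff_dvd two_ne_zero).mp <| by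
    simpa using dvd_add ((Dvd.intro (4 * t) (by ring)).trans h) (dvd_refl t)
  have htt : t * t ∣ t * 1 := by
    simpa [sq] using dvd_sub (pow_dvd_pow_of_dvd hty 2) ((Dvd.intro_left 4 rfl).trans h)
  rcases isUnit_iff.mp (isUnit_of_dvd_one ((mul_dvd_mul_iff_left ht.ne_zero).mp htt)) with rfl | rfl
  · rfl
  · have h4 : ((y ^ 2 + 1 : ℤ) : ZMod 4) = 0 :=
      (ZMod.intCast_zmod_eq_zero_iff_dvd _ 4).mpr (by simpa using h)
    push_cast at h4
    generalize (y : ZMod 4) = z at h4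
    revert z
    decide

lemma isSquare_of_four_mul_sq_dvd {D x : ℤ} (h : 4 * D ^ 2 ∣ x ^ 2 - D) : IsSquare D := by
  obtain ⟨s, t, rfl, ht⟩ := exists_sq_mul_squarefree D
  rcases eq_or_ne s 0 with rfl | hs
  · exact ⟨0, by ring⟩
  obtain ⟨y, rfl⟩ : s ∣ x := (pow_dvd_pow_iff two_ne_zero).mp <| by
    simpa using dvd_add ((Dvd.intro (4 * s ^ 2 * t ^ 2) (by ring)).trans h)
      (Dvd.intro t rfl : s ^ 2 ∣ s ^ 2 * t)
  have hy : 4 * t ^ 2 ∣ y ^ 2 - t := by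
    have : s ^ 2 * (4 * s ^ 2 * t ^ 2) ∣ s ^ 2 * (y ^ 2 - t) := by convert h using 1 <;> ring
    exact (Dvd.intro_left (s ^ 2) (by ring)).trans
      ((mul_dvd_mul_iff_left (pow_ne_zero 2 hs)).mp this)
  rw [eq_one_of_squarefree_of_four_mul_sq_dvd ht hy]
  exact ⟨s, by ring⟩

lemma isSquare_of_forall_dvd_sq_sub {D : ℤ} (h : ∀ q : ℕ, 0 < q → ∃ x : ℤ, (q : ℤ) ∣ x ^ 2 - D) :
    IsSquare D := by
  rcases eq_or_ne D 0 with rfl | hD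
  · exact ⟨0, by ring⟩
  obtain ⟨x, hx⟩ := h (4 * D.natAbs ^ 2) (by positivity)
  exact isSquare_of_four_mul_sq_dvd (by simpa using hx)

end Int

namespace Polynomial

section CommSemiring

variable {R : Type*} [CommSemiring R]

lemma eval_eq_of_natDegree_le_two {f : R[X]} (hf : f.natDegree ≤ 2) (x : R) :
    f.eval x = f.coeff 2 * (x * x) + f.coeff 1 * x + f.coeff 0 := by
  rw [eval_eq_sum_range' (Nat.lt_succ_of_le hf)]
  simp only [Finset.sum_range_succ, Finset.sum_range_zero]
  ring

lemma isPrimitive_C_mul_X_add_C {a b : R} (h : IsRelPrime a b) : (C a * X + C b).IsPrimitive :=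
  fun r hr ↦ h (by simpa using (C_dvd_iff_dvd_coeff _ _).mp hr 1)
    (by simpa using (C_dvd_iff_dvd_coeff _ _).mp hr 0)

end CommSemiring

section CommRing

variable {R : Type*} [CommRing R]

lemma IsPrimitive.exists_eq_C_mul_of_C_mul_eq [IsDomain R] [NormalizedGCDMonoid R] {P f : R[X]}
    (hP : P.IsPrimitive) {c d : R} (hc : c ≠ 0) (h : C c * f = C d * P) : ∃ a, f = C a * P := by
  obtain ⟨a, rfl⟩ : c ∣ d := by
    have : c ∣ (C d * P).content := h ▸ dvd_content_iff_C_dvd.mpr (dvd_mul_right _ _)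
    simpa [hP.content_eq_one] using (associated_content_C_mul d P).dvd_iff_dvd_right.mp this
  exact ⟨a, mul_left_cancel₀ (C_ne_zero.mpr hc) (by rw [h, C_mul, mul_assoc])⟩

lemma exists_dvd_eval_mul_of_isCoprime {f : R[X]} {m k : R} (hmk : IsCoprime m k)
    (hm : ∃ x, m ∣ f.eval x) (hk : ∃ x, k ∣ f.eval x) : ∃ x, m * k ∣ f.eval x := by
  obtain ⟨x₁, hx₁⟩ := hm
  obtain ⟨x₂, hx₂⟩ := hk
  obtain ⟨u, v, huv⟩ := hmk
  let x := x₁ * (v * k) + x₂ * (u * m)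
  have h₁ : m ∣ x - x₁ := ⟨u * (x₂ - x₁), by linear_combination x₁ * huv⟩
  have h₂ : k ∣ x - x₂ := ⟨v * (x₁ - x₂), by linear_combination x₂ * huv⟩
  refine ⟨x, IsCoprime.mul_dvd ⟨u, v, huv⟩ ?_ ?_⟩
  · simpa using dvd_add (h₁.trans (sub_dvd_eval_sub _ _ f)) hx₁
  · simpa using dvd_add (h₂.trans (sub_dvd_eval_sub _ _ f)) hx₂

lemma exists_dvd_mul_add_of_isCoprime {u m : R} (h : IsCoprime u m) (v : R) :
    ∃ x, m ∣ u * x + v := by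
  obtain ⟨s, t, hst⟩ := h
  exact ⟨-(v * s), v * t, by linear_combination (-v) * hst⟩

end CommRing

def IsIntersective (f : ℤ[X]) : Prop :=
  ∀ q : ℕ, 0 < q → ∃ n : ℤ, (q : ℤ) ∣ f.eval n

lemma isIntersective_of_prime_pow {f : ℤ[X]}
    (h : ∀ p k : ℕ, p.Prime → ∃ n : ℤ, ((p ^ k : ℕ) : ℤ) ∣ f.eval n) : f.IsIntersective := by
  intro q
  induction q using Nat.recOnPrimeCoprime with
  | zero => exact fun h0 ↦ absurd h0 (lt_irrefl 0)
  | prime_pow p k hp => exact fun _ ↦ h p k hp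
  | coprime a b ha hb hab iha ihb =>
    intro _
    push_cast
    exact exists_dvd_eval_mul_of_isCoprime (Nat.isCoprime_iff_coprime.mpr hab)
      (iha (by omega)) (ihb (by omega))

lemma isIntersective_C_mul_linear_mul_linear {a α β γ lam : ℤ} (hαγ : IsCoprime α γ) :
    (C a * (C α * X + C β) * (C γ * X + C lam)).IsIntersective := by
  refine isIntersective_of_prime_pow fun p k hp ↦ ?_
  have hp' : Prime (p : ℤ) := Nat.prime_iff_prime_int.mp hp
  have hcop {u : ℤ} (hu : ¬(p : ℤ) ∣ u) : IsCoprime u ((p ^ k : ℕ) : ℤ) := by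
    push_cast
    exact ((hp'.irreducible.coprime_iff_not_dvd).mpr hu).symm.pow_right
  simp only [eval_mul, eval_add, eval_C, eval_X]
  by_cases hα : (p : ℤ) ∣ α
  · have hγ : ¬(p : ℤ) ∣ γ := fun hγ ↦ hp'.not_isUnit (hαγ.isUnit_of_dvd' hα hγ)
    obtain ⟨n, hn⟩ := exists_dvd_mul_add_of_isCoprime (hcop hγ) lam
    exact ⟨n, dvd_mul_of_dvd_right hn _⟩
  · obtain ⟨n, hn⟩ := exists_dvd_mul_add_of_isCoprime (hcop hα) β
    exact ⟨n, dvd_mul_of_dvd_left (dvd_mul_of_dvd_right hn _) _⟩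

lemma IsIntersective.isSquare_discrim {f : ℤ[X]} (hf : f.IsIntersective) (h2 : f.natDegree ≤ 2) :
    IsSquare (discrim (f.coeff 2) (f.coeff 1) (f.coeff 0)) := by
  refine Int.isSquare_of_forall_dvd_sq_sub fun q hq ↦ ?_
  obtain ⟨n, hn⟩ := hf q hq
  refine ⟨2 * f.coeff 2 * n + f.coeff 1, ?_⟩
  have : (2 * f.coeff 2 * n + f.coeff 1) ^ 2 - discrim (f.coeff 2) (f.coeff 1) (f.coeff 0) =
      4 * f.coeff 2 * f.eval n := by
    rw [eval_eq_of_natDegree_le_two h2, discrim]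
    ring
  exact this ▸ dvd_mul_of_dvd_right hn _

lemma IsIntersective.isCoprime {a α β γ lam : ℤ}
    (hf : (C a * (C α * X + C β) * (C γ * X + C lam)).IsIntersective) (ha : a ≠ 0)
    (hαβ : IsCoprime α β) (hγlam : IsCoprime γ lam) : IsCoprime α γ := by
  rw [Int.isCoprime_iff_gcd_eq_one]
  by_contra hg
  obtain ⟨p, hp, hpg⟩ := Nat.exists_prime_and_dvd hg
  have hp' : Prime (p : ℤ) := Nat.prime_iff_prime_int.mp hp
  have hpα : (p : ℤ) ∣ α := (Int.natCast_dvd_natCast.mpr hpg).trans (Int.gcd_dvd_left α γ)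
  have hpγ : (p : ℤ) ∣ γ := (Int.natCast_dvd_natCast.mpr hpg).trans (Int.gcd_dvd_right α γ)
  obtain ⟨n, hn⟩ := hf ((p : ℤ) * a).natAbs (Int.natAbs_pos.mpr (mul_ne_zero hp'.ne_zero ha))
  simp only [eval_mul, eval_add, eval_C, eval_X, Int.natAbs_dvd] at hn
  have hdvd : (p : ℤ) ∣ (α * n + β) * (γ * n + lam) := by
    rw [mul_comm (p : ℤ), mul_assoc] at hn
    exact (mul_dvd_mul_iff_left ha).mp hn
  rcases hp'.dvd_or_dvd hdvd with h | h
  · exact hp'.not_isUnit <| hαβ.isUnit_of_dvd' hpα <|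
      (dvd_add_right (dvd_mul_of_dvd_left hpα n)).mp h
  · exact hp'.not_isUnit <| hγlam.isUnit_of_dvd' hpγ <|
      (dvd_add_right (dvd_mul_of_dvd_left hpγ n)).mp h

lemma exists_eq_C_mul_linear_mul_linear {f : ℤ[X]} (hf : f.natDegree = 2)
    (hD : IsSquare (discrim (f.coeff 2) (f.coeff 1) (f.coeff 0))) :
    ∃ a α β γ lam : ℤ, IsCoprime α β ∧ IsCoprime γ lam ∧
      f = C a * (C α * X + C β) * (C γ * X + C lam) := by
  have hA : f.coeff 2 ≠ 0 := by
    rw [← hf]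
    exact leadingCoeff_ne_zero.mpr (ne_zero_of_natDegree_gt (n := 0) (by omega))
  obtain ⟨d, hd⟩ := hD
  have h2A : 2 * f.coeff 2 ≠ 0 := mul_ne_zero two_ne_zero hA
  obtain ⟨α, β, g₁, hαβ, hα, hβ⟩ := UniqueFactorizationMonoid.exists_reduced_factors _ h2A (f.coeff 1 - d)
  obtain ⟨γ, lam, g₂, hγlam, hγ, hlam⟩ := UniqueFactorizationMonoid.exists_reduced_factors _ h2A (f.coeff 1 + d)
  have key : C (4 * f.coeff 2) * f = C (g₁ * g₂) * ((C α * X + C β) * (C γ * X + C lam)) := by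
    refine Polynomial.funext fun x ↦ ?_
    simp only [eval_mul, eval_add, eval_C, eval_X, eval_eq_of_natDegree_le_two hf.le]
    calc 4 * f.coeff 2 * (f.coeff 2 * (x * x) + f.coeff 1 * x + f.coeff 0)
        = (2 * f.coeff 2 * x + (f.coeff 1 - d)) * (2 * f.coeff 2 * x + (f.coeff 1 + d)) := by
          rw [discrim] at hd
          linear_combination -hd
      _ = (g₁ * α * x + g₁ * β) * (g₂ * γ * x + g₂ * lam) := by rw [hα, hβ, hγ, hlam]
      _ = g₁ * g₂ * ((α * x + β) * (γ * x + lam)) := by ring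
  have hP := (isPrimitive_C_mul_X_add_C hαβ).mul (isPrimitive_C_mul_X_add_C hγlam)
  obtain ⟨a, ha⟩ := hP.exists_eq_C_mul_of_C_mul_eq (mul_ne_zero four_ne_zero hA) key
  exact ⟨a, α, β, γ, lam, hαβ.isCoprime, hγlam.isCoprime, by rw [ha, mul_assoc]⟩

end Polynomial

/-- A quadratic polynomial `f ∈ ℤ[x]` is intersective (has a root modulo `q` for every
positive integer `q`) if and only if it factors as `a(αx+β)(γx+λ)` with
`gcd(α,β) = gcd(γ,λ) = gcd(α,γ) = 1`. -/
theorem intersective_quadratic_iff (f : Polynomial ℤ) (hf : f.natDegree = 2) :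
    (∀ q : ℕ, 0 < q → ∃ n : ℤ, (q : ℤ) ∣ f.eval n) ↔
      ∃ a α β γ lam : ℤ, IsCoprime α β ∧ IsCoprime γ lam ∧ IsCoprime α γ ∧
        ∀ x : ℤ, f.eval x = a * (α * x + β) * (γ * x + lam) := by
  change f.IsIntersective ↔ _
  constructor
  · intro hint
    obtain ⟨a, α, β, γ, lam, hαβ, hγlam, rfl⟩ :=
      exists_eq_C_mul_linear_mul_linear hf (hint.isSquare_discrim hf.le)
    have ha : a ≠ 0 := by
      rintro rfl
      simp at hf
    exact ⟨a, α, β, γ, lam, hαβ, hγlam, hint.isCoprime ha hαβ hγlam, fun x ↦ by simp⟩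
  · rintro ⟨a, α, β, γ, lam, -, -, hαγ, hfx⟩
    have hfac : f = C a * (C α * X + C β) * (C γ * X + C lam) :=
      Polynomial.funext fun x ↦ by simp [hfx]
    exact hfac ▸ isIntersective_C_mul_linear_mul_linear hαγ
end

section
/- If a quadratic polynomial f ∈ ℤ[x] has no rational roots, then f is not intersective: there exists a prime p and a positive integer k such that f has no root modulo p^k. -/
/-- If `p^(2k)` divides `x^2`, then `p^k` divides `x`. -/
lemma pow_dvd_of_pow_dvd_sq {p : ℕ} (hp : p.Prime) (x : ℤ) (k : ℕ)
    (h : (p : ℤ) ^ (2 * k) ∣ x ^ 2) : (p : ℤ) ^ k ∣ x := by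
  rcases eq_or_ne x 0 with rfl | hx
  · simp
  · rw [← Int.natAbs_dvd_natAbs] at h ⊢
    simp only [Int.natAbs_pow, Int.natAbs_natCast] at h ⊢
    have hn : x.natAbs ≠ 0 := Int.natAbs_ne_zero.mpr hx
    rw [hp.pow_dvd_iff_le_factorization (pow_ne_zero _ hn)] at h
    rw [hp.pow_dvd_iff_le_factorization hn]
    rw [Nat.factorization_pow] at h
    simp at h
    omega

/-- If `p^(2k+1)` divides `x^2`, then so does `p^(2k+2)`. -/
lemma pow_succ_dvd_sq {p : ℕ} (hp : p.Prime) (x : ℤ) (k : ℕ)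
    (h : (p : ℤ) ^ (2 * k + 1) ∣ x ^ 2) : (p : ℤ) ^ (2 * k + 2) ∣ x ^ 2 := by
  rcases eq_or_ne x 0 with rfl | hx
  · simp
  · rw [← Int.natAbs_dvd_natAbs] at h ⊢
    simp only [Int.natAbs_pow, Int.natAbs_natCast] at h ⊢
    have hn : x.natAbs ≠ 0 := Int.natAbs_ne_zero.mpr hx
    rw [hp.pow_dvd_iff_le_factorization (pow_ne_zero _ hn)] at h ⊢
    rw [Nat.factorization_pow] at h ⊢
    simp at h ⊢
    omega

/-- Case of odd p-adic valuation: no square is congruent to `D` mod `p^(2s+2)`. -/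
lemma no_sqrt_of_odd_val {p : ℕ} (hp : p.Prime) (s : ℕ) (E : ℤ)
    (hE : ¬ (p : ℤ) ∣ E) (x : ℤ) :
    ¬ (p : ℤ) ^ (2 * s + 2) ∣ x ^ 2 - (p : ℤ) ^ (2 * s + 1) * E := by
  intro h
  have h1 : (p : ℤ) ^ (2 * s + 1) ∣ x ^ 2 := by
    have : (p : ℤ) ^ (2 * s + 1) ∣ x ^ 2 - (p : ℤ) ^ (2 * s + 1) * E :=
      dvd_trans (pow_dvd_pow _ (by omega)) h
    have := this.add (Dvd.intro E rfl)
    simpa using this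
  have h2 : (p : ℤ) ^ (2 * s + 2) ∣ x ^ 2 := pow_succ_dvd_sq hp x s h1
  have h3 : (p : ℤ) ^ (2 * s + 2) ∣ (p : ℤ) ^ (2 * s + 1) * E := by
    have := h2.sub h
    simpa using this
  rw [pow_succ] at h3
  have h4 : (p : ℤ) ∣ E := by
    have hpne : ((p : ℤ) ^ (2 * s + 1)) ≠ 0 := pow_ne_zero _ (by exact_mod_cast hp.ne_zero)
    exact (mul_dvd_mul_iff_left hpne).mp h3
  exact hE h4

/-- Key lemma: if `D` is not a perfect square in ℤ, then there is a prime power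
modulo which `D` is not a square. -/
lemma exists_prime_pow_not_square (D : ℤ) (hD : ¬ ∃ t : ℤ, t ^ 2 = D) :
    ∃ p : ℕ, p.Prime ∧ ∃ k : ℕ, 0 < k ∧ ∀ x : ℤ, ¬ (p : ℤ) ^ k ∣ x ^ 2 - D := by
  have hD0 : D ≠ 0 := by rintro rfl; exact hD ⟨0, by norm_num⟩
  obtain ⟨u, m, hum, hu⟩ := Nat.sq_mul_squarefree D.natAbs
  have hN0 : D.natAbs ≠ 0 := Int.natAbs_ne_zero.mpr hD0
  have hm0 : m ≠ 0 := by rintro rfl; simp at hum; omega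
  have hu0 : u ≠ 0 := by rintro rfl; simp at hum; omega
  rcases eq_or_ne u 1 with rfl | hu1
  · -- D = ± m^2
    have hDm : D = (m : ℤ) ^ 2 ∨ D = -((m : ℤ) ^ 2) := by
      rcases Int.natAbs_eq D with h | h
      · left; rw [h, ← hum]; push_cast; ring
      · right; rw [h, ← hum]; push_cast; ring
    rcases hDm with h | h
    · exact absurd ⟨(m : ℤ), h.symm⟩ hD
    · -- D = -m^2; work mod a power of 2
      obtain ⟨s, e, he, hme⟩ := Nat.exists_eq_pow_mul_and_not_dvd hm0 2 (by norm_num)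
      refine ⟨2, Nat.prime_two, 2 * s + 2, by omega, fun x hx => ?_⟩
      have hx' : (2 : ℤ) ^ (2 * s + 2) ∣ x ^ 2 + 2 ^ (2 * s) * (e : ℤ) ^ 2 := by
        have heq : x ^ 2 - D = x ^ 2 + 2 ^ (2 * s) * (e : ℤ) ^ 2 := by
          rw [h, hme]; push_cast; ring
        rw [← heq]
        exact_mod_cast hx
      have h2s : (2 : ℤ) ^ (2 * s) ∣ x ^ 2 := by
        have hd1 : (2 : ℤ) ^ (2 * s) ∣ x ^ 2 + 2 ^ (2 * s) * (e : ℤ) ^ 2 :=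
          dvd_trans (pow_dvd_pow _ (by omega)) hx'
        have := hd1.sub (dvd_mul_right ((2:ℤ) ^ (2*s)) ((e : ℤ) ^ 2))
        simpa using this
      obtain ⟨y, hy⟩ := pow_dvd_of_pow_dvd_sq Nat.prime_two x s (by exact_mod_cast h2s)
      push_cast at hy
      rw [hy] at hx'
      have h4 : (4 : ℤ) ∣ y ^ 2 + (e : ℤ) ^ 2 := by
        have heq : ((2 : ℤ) ^ s * y) ^ 2 + 2 ^ (2 * s) * (e : ℤ) ^ 2
            = 2 ^ (2 * s) * (y ^ 2 + (e : ℤ) ^ 2) := by ring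
        rw [heq] at hx'
        rw [show 2 * s + 2 = (2 * s) + 2 by rfl, pow_add] at hx'
        have hpne : ((2 : ℤ) ^ (2 * s)) ≠ 0 := pow_ne_zero _ two_ne_zero
        have := (mul_dvd_mul_iff_left hpne).mp hx'
        simpa using this
      -- e is odd, so y^2 + e^2 ≡ 1 or 2 mod 4
      have heodd : Odd (e : ℤ) := by
        rw [Int.odd_coe_nat]
        exact Nat.odd_iff.mpr (Nat.two_dvd_ne_zero.mp he)
      obtain ⟨u2, hu2⟩ := heodd
      rcases Int.even_or_odd y with ⟨t, ht⟩ | ⟨t, ht⟩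
      · have heq2 : y ^ 2 + (e : ℤ) ^ 2 - 4 * (t ^ 2 + u2 ^ 2 + u2) = 1 := by
          rw [ht, hu2]; ring
        have : (4 : ℤ) ∣ 1 := heq2 ▸ h4.sub ⟨_, rfl⟩
        norm_num at this
      · have heq2 : y ^ 2 + (e : ℤ) ^ 2 - 4 * (t ^ 2 + t + u2 ^ 2 + u2) = 2 := by
          rw [ht, hu2]; ring
        have : (4 : ℤ) ∣ 2 := heq2 ▸ h4.sub ⟨_, rfl⟩
        norm_num at this
  · -- u ≠ 1 : u has a prime factor p, and v_p(D) is odd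
    obtain ⟨p, hp, hpu⟩ := Nat.exists_prime_and_dvd hu1
    obtain ⟨s, e, he, hme⟩ := Nat.exists_eq_pow_mul_and_not_dvd hm0 p hp.ne_one
    obtain ⟨u', hu'⟩ := hpu
    have hpu' : ¬ p ∣ u' := by
      intro hdvd
      have : p * p ∣ u := by obtain ⟨w, hw⟩ := hdvd; exact ⟨w, by rw [hu', hw]; ring⟩
      exact hp.not_isUnit (hu p this)
    -- D = ± p^(2s+1) * (e^2 * u')
    have hsign : D = (D.natAbs : ℤ) ∨ D = -(D.natAbs : ℤ) := Int.natAbs_eq D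
    have key : ∃ E : ℤ, ¬ (p : ℤ) ∣ E ∧ D = (p : ℤ) ^ (2 * s + 1) * E := by
      have hNabs : (D.natAbs : ℤ) = (p : ℤ) ^ (2 * s + 1) * ((e : ℤ) ^ 2 * (u' : ℤ)) := by
        rw [← hum, hme, hu']; push_cast; ring
      have hnd : ¬ (p : ℤ) ∣ (e : ℤ) ^ 2 * (u' : ℤ) := by
        intro hdvd
        rcases ((Nat.prime_iff_prime_int.mp hp).dvd_mul.mp hdvd) with h' | h'
        · have := (Nat.prime_iff_prime_int.mp hp).dvd_of_dvd_pow h'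
          exact he (by exact_mod_cast this)
        · exact hpu' (by exact_mod_cast h')
      rcases hsign with h | h
      · exact ⟨(e : ℤ) ^ 2 * (u' : ℤ), hnd, by rw [h, hNabs]⟩
      · refine ⟨-((e : ℤ) ^ 2 * (u' : ℤ)), fun hdvd => hnd ((dvd_neg).mp hdvd), ?_⟩
        rw [h, hNabs]; ring
    obtain ⟨E, hE, hDE⟩ := key
    refine ⟨p, hp, 2 * s + 2, by omega, fun x hx => ?_⟩
    rw [hDE] at hx
    exact no_sqrt_of_odd_val hp s E hE x hx

/-- If a quadratic polynomial `f(x) = ax² + bx + c ∈ ℤ[x]` (with `a ≠ 0`) has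
discriminant which is not the square of a rational, then `f` is not intersective:
there is a prime `p` and `k ≥ 1` such that `f` has no root modulo `p^k`. -/
theorem quadratic_no_rational_roots_not_intersective (a b c : ℤ) (ha : a ≠ 0)
    (hd : ¬ ∃ r : ℚ, r ^ 2 = ((b ^ 2 - 4 * a * c : ℤ) : ℚ)) :
    ∃ p : ℕ, p.Prime ∧ ∃ k : ℕ, 0 < k ∧
      ¬ ∃ n : ℤ, ((p : ℤ) ^ k) ∣ (a * n ^ 2 + b * n + c) := by
  set D : ℤ := b ^ 2 - 4 * a * c with hDdef
  have hDsq : ¬ ∃ t : ℤ, t ^ 2 = D := by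
    rintro ⟨t, ht⟩
    exact hd ⟨(t : ℚ), by exact_mod_cast congrArg (Int.cast : ℤ → ℚ) ht⟩
  obtain ⟨p, hp, k, hk, hno⟩ := exists_prime_pow_not_square D hDsq
  refine ⟨p, hp, k, hk, ?_⟩
  rintro ⟨n, hn⟩
  apply hno (2 * a * n + b)
  have : (2 * a * n + b) ^ 2 - D = 4 * a * (a * n ^ 2 + b * n + c) := by
    rw [hDdef]; ring
  rw [this]
  exact hn.mul_left _
end

section
/- If f(x) = a(αx + β)(γx + λ) with integers a, α, β, γ, λ, gcd(α,β) = gcd(γ,λ) = 1, and some prime p divides both α and γ, then f is not intersective: for any k with p^k ∤ a, f has no root modulo p^k. -/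
/-- If `f(x) = a(αx+β)(γx+λ)` with `gcd(α,β) = gcd(γ,λ) = 1` and a prime `p` divides
both `α` and `γ`, then for any `k` with `p^k ∤ a`, `f` has no root modulo `p^k`. -/
theorem common_prime_factor_not_intersective (a α β γ lam : ℤ)
    (h1 : IsCoprime α β) (h2 : IsCoprime γ lam)
    (p : ℕ) (hp : p.Prime) (hpα : (p : ℤ) ∣ α) (hpγ : (p : ℤ) ∣ γ)
    (k : ℕ) (hk : ¬ ((p : ℤ) ^ k ∣ a)) :
    ¬ ∃ n : ℤ, (p : ℤ) ^ k ∣ a * (α * n + β) * (γ * n + lam) := by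
  rintro ⟨n, hn⟩
  have hpZ : Prime (p : ℤ) := Int.prime_iff_natAbs_prime.mpr (by simpa using hp)
  have hβ : ¬ (p : ℤ) ∣ (α * n + β) := by
    intro h
    have hb : (p : ℤ) ∣ β := (dvd_add_right (hpα.mul_right n)).mp h
    exact hpZ.not_unit (h1.isUnit_of_dvd' hpα hb)
  have hlam : ¬ (p : ℤ) ∣ (γ * n + lam) := by
    intro h
    have hb : (p : ℤ) ∣ lam := (dvd_add_right (hpγ.mul_right n)).mp h
    exact hpZ.not_unit (h2.isUnit_of_dvd' hpγ hb)
  have h4 := hpZ.pow_dvd_of_dvd_mul_right k hlam hn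
  exact hk (hpZ.pow_dvd_of_dvd_mul_right k hβ h4)
end

section
/- Let f(x) = (αx + β)(γx + λ) with α, β, γ, λ ∈ ℤ, gcd(α,β) = gcd(γ,λ) = gcd(α,γ) = 1, and suppose f has no double root (i.e., αλ − βγ ≠ 0). Fix d ∈ ℕ and an integer r with d ∣ f(r) and such that for every prime power p^k ∣ d, either p^k ∣ αr + β or p^k ∣ γr + λ. Define f_d(x) = f(r + dx)/d ∈ ℤ[x]. Then the gcd of the linear and quadratic coefficients of f_d divides αλ − βγ; in particular cont(f_d) ≤ |αλ − βγ|. -/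
/-!
Write `A = αr + β` and `C = γr + λ`, so that the linear coefficient of `f_d` is `αC + γA` and
`αλ - βγ = αC - γA`. Since `α` is coprime to `γ` and to `A`, and `γ` to `α` and to `C`, the
linear coefficient is coprime to `αγ`; hence the gcd `g` divides `d`. Each prime power dividing
`g` then divides `d`, hence `A` or `C`, hence one of `αC`, `γA`, and, as it divides their sum,
both of them. So `g` divides `αC` and `γA`, and therefore their difference.
-/

theorem isCoprime_mul_mul_add_mul {R : Type*} [CommRing R] {a b x y : R}
    (hab : IsCoprime a b) (hay : IsCoprime a y) (hbx : IsCoprime b x) :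
    IsCoprime (a * b) (a * x + b * y) :=
  IsCoprime.mul_left ((hab.mul_right hay).mul_add_left_right x)
    ((hab.symm.mul_right hbx).add_mul_left_right y)

theorem Int.natCast_dvd_of_dvd_add_of_prime_pow_dvd_or {n : ℕ} {x y : ℤ}
    (hsum : (n : ℤ) ∣ x + y)
    (hpow : ∀ p k : ℕ, p.Prime → p ^ k ∣ n → (p : ℤ) ^ k ∣ x ∨ (p : ℤ) ^ k ∣ y) :
    (n : ℤ) ∣ x ∧ (n : ℤ) ∣ y := by
  have hx : (n : ℤ) ∣ x := by
    rw [Int.natCast_dvd, Nat.dvd_iff_prime_pow_dvd_dvd]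
    intro p k hp hpk
    have hsum' : (p : ℤ) ^ k ∣ x + y :=
      (Int.natCast_dvd_natCast.mpr hpk).trans (by exact_mod_cast hsum)
    rw [← Int.natCast_dvd, Nat.cast_pow]
    rcases hpow p k hp hpk with h | h
    · exact h
    · exact (dvd_add_left h).mp hsum'
  exact ⟨hx, (dvd_add_right hx).mp hsum⟩

theorem content_of_auxiliary_divides_general (α β γ lam : ℤ)
    (h1 : IsCoprime α β) (h2 : IsCoprime γ lam) (h3 : IsCoprime α γ)
    (d : ℕ) (r : ℤ)
    (hroots : ∀ p k : ℕ, p.Prime → (p : ℤ) ^ k ∣ (d : ℤ) →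
      (p : ℤ) ^ k ∣ (α * r + β) ∨ (p : ℤ) ^ k ∣ (γ * r + lam)) :
    (Int.gcd (2 * α * γ * r + (α * lam + β * γ)) ((d : ℤ) * α * γ) : ℤ) ∣ (α * lam - β * γ) := by
  set A := α * r + β
  set C := γ * r + lam
  set g := Int.gcd (2 * α * γ * r + (α * lam + β * γ)) ((d : ℤ) * α * γ)
  have hgS : (g : ℤ) ∣ α * C + γ * A := by
    convert Int.gcd_dvd_left (2 * α * γ * r + (α * lam + β * γ)) ((d : ℤ) * α * γ) using 1
    ring
  have hcop : IsCoprime (α * γ) (α * C + γ * A) :=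
    isCoprime_mul_mul_add_mul h3 (h1.mul_add_left_right r) (h2.mul_add_left_right r)
  have hgd : (g : ℤ) ∣ d := by
    refine (hcop.symm.of_isCoprime_of_dvd_left hgS).dvd_of_dvd_mul_right ?_
    rw [← mul_assoc]
    exact Int.gcd_dvd_right _ _
  obtain ⟨hgC, hgA⟩ := Int.natCast_dvd_of_dvd_add_of_prime_pow_dvd_or hgS fun p k hp hpk =>
    (hroots p k hp ((Int.natCast_dvd_natCast.mpr hpk).trans (by exact_mod_cast hgd))).symm.imp
      (dvd_mul_of_dvd_right · α) (dvd_mul_of_dvd_right · γ)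
  have hΔ : α * lam - β * γ = α * C - γ * A := by ring
  exact hΔ ▸ dvd_sub hgC hgA

/-- Content bound for the auxiliary polynomial: if `f(x) = (αx+β)(γx+λ)` with the gcd
conditions, no double root, `d ∣ f(r)`, and for every prime power `p^k ∣ d` either
`p^k ∣ αr+β` or `p^k ∣ γr+λ`, then the gcd of the linear and quadratic coefficients of
`f_d(x) = f(r+dx)/d`, namely `gcd(2αγr + (αλ+βγ), dαγ)`, divides `αλ − βγ`. -/
theorem content_of_auxiliary_divides (α β γ lam : ℤ)
    (h1 : IsCoprime α β) (h2 : IsCoprime γ lam) (h3 : IsCoprime α γ)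
    (hD : α * lam - β * γ ≠ 0) (d : ℕ) (hd : 0 < d) (r : ℤ)
    (hdr : (d : ℤ) ∣ (α * r + β) * (γ * r + lam))
    (hroots : ∀ p k : ℕ, p.Prime → (p : ℤ) ^ k ∣ (d : ℤ) →
      (p : ℤ) ^ k ∣ (α * r + β) ∨ (p : ℤ) ^ k ∣ (γ * r + lam)) :
    (Int.gcd (2 * α * γ * r + (α * lam + β * γ)) ((d : ℤ) * α * γ) : ℤ) ∣ (α * lam - β * γ) :=
  content_of_auxiliary_divides_general α β γ lam h1 h2 h3 d r hroots
end

section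
/- Let f ∈ ℤ[x] be intersective and for each d ∈ ℕ choose r_d ∈ (−d, 0] with d ∣ f(r_d) and r_d ≡ r_s (mod s) whenever s ∣ d. If f does not have the form a(x−b)², define f_d(x) = f(r_d + dx)/d. Then each f_d is itself an intersective quadratic polynomial: for every positive integer q there exists n with q ∣ f_d(n). -/
/-- If `f(x) = a(αx+β)(γx+λ)` is an intersective quadratic (gcd conditions, no double
root) and `(r_d)` is a compatible system of roots (`r_d ∈ (−d,0]`, `d ∣ f(r_d)`,
`r_d ≡ r_s (mod s)` for `s ∣ d`), then each auxiliary polynomial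
`f_d(x) = f(r_d + dx)/d` is intersective: for every `q ≥ 1` there is `n` with
`q ∣ f_d(n)`, i.e. `d·q ∣ f(r_d + d·n)`. -/
theorem auxiliary_intersective (a α β γ lam : ℤ)
    (h1 : IsCoprime α β) (h2 : IsCoprime γ lam) (h3 : IsCoprime α γ)
    (hD : α * lam - β * γ ≠ 0)
    (r : ℕ → ℤ)
    (hr1 : ∀ d : ℕ, 0 < d → -(d : ℤ) < r d ∧ r d ≤ 0)
    (hr2 : ∀ d : ℕ, 0 < d → (d : ℤ) ∣ a * (α * r d + β) * (γ * r d + lam))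
    (hr3 : ∀ s d : ℕ, 0 < s → s ∣ d → (s : ℤ) ∣ (r d - r s)) :
    ∀ d q : ℕ, 0 < d → 0 < q → ∃ n : ℤ,
      ((d : ℤ) * (q : ℤ)) ∣ a * (α * (r d + d * n) + β) * (γ * (r d + d * n) + lam) := by
  intro d q hd hq
  obtain ⟨n, hn⟩ := hr3 d (d * q) hd ⟨q, rfl⟩
  refine ⟨n, ?_⟩
  have h := hr2 (d * q) (Nat.mul_pos hd hq)
  have : r (d * q) = r d + d * n := by linarith
  rw [this] at h
  push_cast at h
  exact h
end

section
/- Let f(x) = a(αx+β)(γx+λ) with gcd(α,β) = gcd(γ,λ) = gcd(α,γ) = 1. Then there exists a family (r_d)_{d∈ℕ} of integers with r_d ∈ (−d, 0], f(r_d) ≡ 0 (mod d) for all d, and r_d ≡ r_s (mod s) whenever s ∣ d. -/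
lemma keyA (n m : ℕ) (hn : n ≠ 0) : Nat.Coprime (n / Nat.gcd n (m ^ n)) m := by
  rcases eq_or_ne m 0 with rfl | hm
  · simp [Nat.zero_pow (Nat.pos_of_ne_zero hn), Nat.div_self (Nat.pos_of_ne_zero hn)]
  by_contra h
  obtain ⟨p, pp, hpu, hpm⟩ := Nat.Prime.not_coprime_iff_dvd.mp h
  set g := Nat.gcd n (m ^ n) with hgdef
  have hg : g ∣ n := Nat.gcd_dvd_left _ _
  have hu0 : n / g ≠ 0 := by
    have : 0 < g := Nat.gcd_pos_of_pos_left _ (Nat.pos_of_ne_zero hn)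
    exact Nat.ne_of_gt (Nat.div_pos (Nat.le_of_dvd (Nat.pos_of_ne_zero hn) hg) this)
  have hfu : 0 < (n / g).factorization p := pp.factorization_pos_of_dvd hu0 hpu
  have hmp : 1 ≤ m.factorization p := pp.factorization_pos_of_dvd hm hpm
  have hfn : n.factorization p < n := Nat.factorization_lt p hn
  have hgf : g.factorization = n.factorization ⊓ (m ^ n).factorization :=
    Nat.factorization_gcd hn (pow_ne_zero _ hm)
  have hdiv : (n / g).factorization = n.factorization - g.factorization :=
    Nat.factorization_div hg
  have : (n / g).factorization p = 0 := by
    rw [hdiv, Finsupp.tsub_apply, hgf, Finsupp.inf_apply, Nat.factorization_pow,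
      Finsupp.smul_apply, smul_eq_mul]
    have : min (n.factorization p) (n * m.factorization p) = n.factorization p := by
      apply min_eq_left
      calc n.factorization p ≤ n := le_of_lt hfn
        _ = n * 1 := (mul_one n).symm
        _ ≤ n * m.factorization p := Nat.mul_le_mul_left n hmp
    omega
  omega

lemma solveLin (A B N : ℤ) (h : IsCoprime A N) : ∃ x : ℤ, N ∣ A * x + B := by
  obtain ⟨m, n, hmn⟩ := h
  exact ⟨-B * m, B * n, by linear_combination (-B) * hmn⟩

lemma crt (x₁ x₂ U V : ℤ) (h : IsCoprime U V) : ∃ x : ℤ, U ∣ x - x₁ ∧ V ∣ x - x₂ := by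
  obtain ⟨s, t, hst⟩ := h
  refine ⟨x₁ * t * V + x₂ * s * U, ⟨x₂ * s - x₁ * s, by linear_combination x₁ * hst⟩,
    ⟨x₁ * t - x₂ * t, by linear_combination x₂ * hst⟩⟩

/-- For `f(x) = a(αx+β)(γx+λ)` with `gcd(α,β) = gcd(γ,λ) = gcd(α,γ) = 1`, there exists
a compatible family of roots `r_d ∈ (−d,0]` with `d ∣ f(r_d)` and `r_d ≡ r_s (mod s)`
whenever `s ∣ d`. -/
theorem exists_compatible_roots (a α β γ lam : ℤ)
    (h1 : IsCoprime α β) (h2 : IsCoprime γ lam) (h3 : IsCoprime α γ) :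
    ∃ r : ℕ → ℤ, ∀ d : ℕ, 0 < d →
      (-(d : ℤ) < r d ∧ r d ≤ 0) ∧
      (d : ℤ) ∣ a * (α * r d + β) * (γ * r d + lam) ∧
      ∀ s : ℕ, 0 < s → s ∣ d → (s : ℤ) ∣ (r d - r s) := by
  classical
  set V : ℕ → ℕ := fun d => Nat.gcd d (α.natAbs ^ d) with hVdef
  set U : ℕ → ℕ := fun d => d / V d with hUdef
  -- basic facts
  have hVdvd : ∀ d, V d ∣ d := fun d => Nat.gcd_dvd_left _ _
  have hVpow : ∀ d, V d ∣ α.natAbs ^ d := fun d => Nat.gcd_dvd_right _ _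
  have hUV : ∀ d : ℕ, 0 < d → U d * V d = d := fun d hd => Nat.div_mul_cancel (hVdvd d)
  have copUα : ∀ d : ℕ, 0 < d → Nat.Coprime (U d) α.natAbs := fun d hd => keyA d _ hd.ne'
  have copUV : ∀ d : ℕ, 0 < d → Nat.Coprime (U d) (V d) := fun d hd =>
    ((copUα d hd).pow_right d).coprime_dvd_right (hVpow d)
  have icopUα : ∀ d : ℕ, 0 < d → IsCoprime ((U d : ℤ)) α := by
    intro d hd
    rw [Int.isCoprime_iff_gcd_eq_one]
    simpa [Int.gcd] using copUα d hd
  have icopVγ : ∀ d : ℕ, 0 < d → IsCoprime ((V d : ℤ)) γ := by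
    intro d hd
    have h1 : IsCoprime γ (α ^ d) := (h3.symm).pow_right
    have h2 : ((V d : ℤ)) ∣ α ^ d := by
      have : ((V d : ℤ)) ∣ ((α.natAbs : ℤ)) ^ d := by
        exact_mod_cast Int.natCast_dvd_natCast.mpr (hVpow d)
      exact this.trans (pow_dvd_pow_of_dvd (Int.natAbs_dvd.mpr dvd_rfl) d)
    exact (h1.of_isCoprime_of_dvd_right h2).symm
  -- existence of compatible root modulo d
  have key : ∀ d : ℕ, 0 < d →
      ∃ x : ℤ, ((U d : ℤ)) ∣ α * x + β ∧ ((V d : ℤ)) ∣ γ * x + lam := by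
    intro d hd
    obtain ⟨x₁, hx₁⟩ := solveLin α β (U d) (icopUα d hd).symm
    obtain ⟨x₂, hx₂⟩ := solveLin γ lam (V d) (icopVγ d hd).symm
    have hcop : IsCoprime ((U d : ℤ)) ((V d : ℤ)) :=
      Nat.isCoprime_iff_coprime.mpr (copUV d hd)
    obtain ⟨x, hxu, hxv⟩ := crt x₁ x₂ (U d) (V d) hcop
    refine ⟨x, ?_, ?_⟩
    · have : α * x + β = α * (x - x₁) + (α * x₁ + β) := by ring
      rw [this]; exact dvd_add (hxu.mul_left α) hx₁
    · have : γ * x + lam = γ * (x - x₂) + (γ * x₂ + lam) := by ring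
      rw [this]; exact dvd_add (hxv.mul_left γ) hx₂
  choose! X hX using key
  refine ⟨fun d => -((-X d) % (d : ℤ)), ?_⟩
  -- r d differs from X d by a multiple of d
  have hrd : ∀ d : ℕ, (d : ℤ) ∣ (-((-X d) % (d : ℤ))) - X d := by
    intro d
    have h := Int.emod_add_mul_ediv (-X d) (d : ℤ)
    exact ⟨(-X d) / d, by linarith⟩
  have hUdvdR : ∀ d : ℕ, 0 < d → ((U d : ℤ)) ∣ α * (-((-X d) % (d : ℤ))) + β := by
    intro d hd
    have hud : (U d : ℤ) ∣ (d : ℤ) := Int.natCast_dvd_natCast.mpr (Dvd.intro _ (hUV d hd))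
    have : α * (-((-X d) % (d : ℤ))) + β
        = α * ((-((-X d) % (d : ℤ))) - X d) + (α * X d + β) := by ring
    rw [this]
    exact dvd_add (((hud.trans (hrd d)).mul_left α)) (hX d hd).1
  have hVdvdR : ∀ d : ℕ, 0 < d → ((V d : ℤ)) ∣ γ * (-((-X d) % (d : ℤ))) + lam := by
    intro d hd
    have hvd : (V d : ℤ) ∣ (d : ℤ) := Int.natCast_dvd_natCast.mpr (hVdvd d)
    have : γ * (-((-X d) % (d : ℤ))) + lam
        = γ * ((-((-X d) % (d : ℤ))) - X d) + (γ * X d + lam) := by ring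
    rw [this]
    exact dvd_add (((hvd.trans (hrd d)).mul_left γ)) (hX d hd).2
  intro d hd
  have hd0 : (d : ℤ) ≠ 0 := by exact_mod_cast hd.ne'
  refine ⟨⟨?_, ?_⟩, ?_, ?_⟩
  · show -(d:ℤ) < -((-X d) % (d : ℤ))
    have := Int.emod_lt_of_pos (-X d) (by exact_mod_cast hd : (0:ℤ) < d)
    linarith
  · show -((-X d) % (d : ℤ)) ≤ 0
    have := Int.emod_nonneg (-X d) hd0
    linarith
  · -- divisibility of f(r d)
    have heq : ((U d : ℤ)) * ((V d : ℤ)) = (d : ℤ) := by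
      exact_mod_cast congrArg (Nat.cast : ℕ → ℤ) (hUV d hd)
    have hmul := mul_dvd_mul (hUdvdR d hd) (hVdvdR d hd)
    rw [heq] at hmul
    show (d:ℤ) ∣ a * (α * (-((-X d) % (d : ℤ))) + β) * (γ * (-((-X d) % (d : ℤ))) + lam)
    rw [mul_assoc]
    exact hmul.mul_left a
  · intro s hs hsd
    -- U s ∣ U d, V s ∣ V d
    have hVsd : V s ∣ V d := Nat.dvd_gcd ((hVdvd s).trans hsd)
      ((hVpow s).trans (pow_dvd_pow _ (Nat.le_of_dvd hd hsd)))
    have hUsd : U s ∣ U d := by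
      have h1 : U s ∣ U d * V d := (Nat.div_dvd_of_dvd (hVdvd s)).trans (by rw [hUV d hd]; exact hsd)
      exact (((copUα s hs).pow_right d).coprime_dvd_right (hVpow d)).dvd_of_dvd_mul_right h1
    -- U s ∣ X d - X s
    have hUs : ((U s : ℤ)) ∣ X d - X s := by
      have hdvd : ((U s : ℤ)) ∣ α * (X d - X s) := by
        have : α * (X d - X s) = (α * X d + β) - (α * X s + β) := by ring
        rw [this]
        exact dvd_sub ((Int.natCast_dvd_natCast.mpr hUsd).trans (hX d hd).1) (hX s hs).1
      exact (icopUα s hs).dvd_of_dvd_mul_left hdvd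
    have hVs : ((V s : ℤ)) ∣ X d - X s := by
      have hdvd : ((V s : ℤ)) ∣ γ * (X d - X s) := by
        have : γ * (X d - X s) = (γ * X d + lam) - (γ * X s + lam) := by ring
        rw [this]
        exact dvd_sub ((Int.natCast_dvd_natCast.mpr hVsd).trans (hX d hd).2) (hX s hs).2
      exact (icopVγ s hs).dvd_of_dvd_mul_left hdvd
    have hsX : (s : ℤ) ∣ X d - X s := by
      have heq : ((U s : ℤ)) * ((V s : ℤ)) = (s : ℤ) := by
        exact_mod_cast congrArg (Nat.cast : ℕ → ℤ) (hUV s hs)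
      have := (Nat.isCoprime_iff_coprime.mpr (copUV s hs)).mul_dvd hUs hVs
      rwa [heq] at this
    show (s:ℤ) ∣ (-((-X d) % (d : ℤ))) - (-((-X s) % (s : ℤ)))
    have e : (-((-X d) % (d : ℤ))) - (-((-X s) % (s : ℤ)))
        = ((-((-X d) % (d : ℤ))) - X d) - ((-((-X s) % (s : ℤ))) - X s) + (X d - X s) := by ring
    rw [e]
    exact dvd_add (dvd_sub ((Int.natCast_dvd_natCast.mpr hsd).trans (hrd d)) (hrd s)) hsX
end

section
/- Let α ≥ 1 be an integer and M ≥ 1, and λ real. Then |∫₁^M x·e^{2πi(αx²+βx)λ} dx| ≤ min{M², (2πα|λ|)^{−1} + 2πM³|β||λ|} for any integer β (with the second bound valid for λ ≠ 0). -/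
open Complex intervalIntegral

/-!
The substitution `y = a x²` makes `x e^{i a x²}` an exact derivative, so its integral over any
interval is at most `|a|⁻¹`. The linear part `e^{i b x}` of the phase differs from `1` by at most
`|b x|`, which costs `|b| M³` on `[1, M]`. With `a = 2παλ` and `b = 2πβλ` this gives the second
bound; the first is `|x e^{iφ}| ≤ M` integrated over an interval of length `M - 1`.
-/

lemma norm_integral_mul_exp_ofReal_mul_I_le {u v : ℝ} (hu : 0 ≤ u) (huv : u ≤ v) (φ : ℝ → ℝ) :
    ‖∫ x in u..v, (x : ℂ) * exp ((φ x : ℂ) * I)‖ ≤ v * (v - u) := by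
  have hbound : ∀ x ∈ Set.uIoc u v, ‖(x : ℂ) * exp ((φ x : ℂ) * I)‖ ≤ v := by
    intro x hx
    rw [Set.uIoc_of_le huv] at hx
    rw [norm_mul, norm_exp_ofReal_mul_I, mul_one, norm_real, Real.norm_of_nonneg (by linarith [hx.1])]
    exact hx.2
  simpa [abs_of_nonneg (sub_nonneg.2 huv)] using norm_integral_le_of_norm_le_const hbound

lemma norm_exp_ofReal_add_mul_I_sub_le (θ η : ℝ) :
    ‖exp (((θ + η : ℝ) : ℂ) * I) - exp ((θ : ℂ) * I)‖ ≤ |η| := by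
  have hfactor : exp (((θ + η : ℝ) : ℂ) * I) - exp ((θ : ℂ) * I)
      = exp ((θ : ℂ) * I) * (exp (I * η) - 1) := by
    rw [ofReal_add, add_mul, exp_add, mul_comm I]
    ring
  rw [hfactor, norm_mul, norm_exp_ofReal_mul_I, one_mul, ← Real.norm_eq_abs]
  exact Real.norm_exp_I_mul_ofReal_sub_one_le

lemma norm_integral_mul_exp_add_linear_sub_le {u v : ℝ} (hu : 0 ≤ u) (huv : u ≤ v)
    {φ : ℝ → ℝ} (hφ : Continuous φ) (b : ℝ) :
    ‖(∫ x in u..v, (x : ℂ) * exp (((φ x + b * x : ℝ) : ℂ) * I))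
        - ∫ x in u..v, (x : ℂ) * exp ((φ x : ℂ) * I)‖ ≤ |b| * v ^ 2 * (v - u) := by
  rw [← integral_sub (by apply Continuous.intervalIntegrable; fun_prop)
    (by apply Continuous.intervalIntegrable; fun_prop)]
  have hbound : ∀ x ∈ Set.uIoc u v,
      ‖(x : ℂ) * exp (((φ x + b * x : ℝ) : ℂ) * I) - (x : ℂ) * exp ((φ x : ℂ) * I)‖
        ≤ |b| * v ^ 2 := by
    intro x hx
    rw [Set.uIoc_of_le huv] at hx
    have hx0 : 0 ≤ x := by linarith [hx.1]
    rw [← mul_sub, norm_mul, norm_real, Real.norm_of_nonneg hx0]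
    calc x * ‖exp (((φ x + b * x : ℝ) : ℂ) * I) - exp ((φ x : ℂ) * I)‖
        ≤ x * (|b| * x) := by
          gcongr
          simpa [abs_mul, abs_of_nonneg hx0] using norm_exp_ofReal_add_mul_I_sub_le (φ x) (b * x)
      _ ≤ |b| * v ^ 2 := by nlinarith [mul_le_mul_of_nonneg_left (pow_le_pow_left₀ hx0 hx.2 2) (abs_nonneg b)]
  simpa [abs_of_nonneg (sub_nonneg.2 huv)] using norm_integral_le_of_norm_le_const hbound

lemma hasDerivAt_exp_mul_sq_div {a : ℝ} (ha : a ≠ 0) (x : ℝ) :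
    HasDerivAt (fun x : ℝ => exp (((a * x ^ 2 : ℝ) : ℂ) * I) / (2 * a * I))
      ((x : ℂ) * exp (((a * x ^ 2 : ℝ) : ℂ) * I)) x := by
  have hphase : HasDerivAt (fun x : ℝ => ((a * x ^ 2 : ℝ) : ℂ)) ((2 * a * x : ℝ) : ℂ) x := by
    refine HasDerivAt.ofReal_comp ?_
    simpa [mul_comm, mul_left_comm] using (hasDerivAt_pow 2 x).const_mul a
  refine (((hphase.mul_const I).cexp).div_const (2 * (a : ℂ) * I)).congr_deriv ?_
  field_simp [ofReal_ne_zero.2 ha, I_ne_zero]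
  push_cast
  ring

lemma integral_mul_exp_mul_sq {a : ℝ} (ha : a ≠ 0) (u v : ℝ) :
    ∫ x in u..v, (x : ℂ) * exp (((a * x ^ 2 : ℝ) : ℂ) * I)
      = (exp (((a * v ^ 2 : ℝ) : ℂ) * I) - exp (((a * u ^ 2 : ℝ) : ℂ) * I)) / (2 * a * I) := by
  rw [integral_eq_sub_of_hasDerivAt (fun x _ => hasDerivAt_exp_mul_sq_div ha x)
    (by apply Continuous.intervalIntegrable; fun_prop), sub_div]

lemma norm_integral_mul_exp_mul_sq_le {a : ℝ} (ha : a ≠ 0) (u v : ℝ) :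
    ‖∫ x in u..v, (x : ℂ) * exp (((a * x ^ 2 : ℝ) : ℂ) * I)‖ ≤ |a|⁻¹ := by
  have hnum : ‖exp (((a * v ^ 2 : ℝ) : ℂ) * I) - exp (((a * u ^ 2 : ℝ) : ℂ) * I)‖ ≤ 2 := by
    refine (norm_sub_le _ _).trans ?_
    rw [norm_exp_ofReal_mul_I, norm_exp_ofReal_mul_I]
    norm_num
  have hden : ‖2 * (a : ℂ) * I‖ = 2 * |a| := by simp
  rw [integral_mul_exp_mul_sq ha, norm_div, hden, div_le_iff₀ (by positivity)]
  calc _ ≤ (2 : ℝ) := hnum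
    _ = |a|⁻¹ * (2 * |a|) := by field_simp [abs_ne_zero.2 ha]

/-- Combined bound: for integer `α ≥ 1`, any integer `β`, `M ≥ 1` and real `λ`,
`|∫₁^M x·e((αx²+βx)λ) dx| ≤ M²`, and for `λ ≠ 0` it is also at most
`(2πα|λ|)⁻¹ + 2πM³|β||λ|`. -/
theorem combined_integral_bound (α β : ℤ) (hα : 1 ≤ α) (M : ℝ) (hM : 1 ≤ M) (lam : ℝ) :
    ‖∫ x in (1 : ℝ)..M, (x : ℂ) *
        Complex.exp ((2 * Real.pi * (((α : ℝ) * x ^ 2 + (β : ℝ) * x) * lam) : ℝ) * Complex.I)‖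
      ≤ M ^ 2 ∧
    (lam ≠ 0 →
      ‖∫ x in (1 : ℝ)..M, (x : ℂ) *
          Complex.exp ((2 * Real.pi * (((α : ℝ) * x ^ 2 + (β : ℝ) * x) * lam) : ℝ) * Complex.I)‖
        ≤ (2 * Real.pi * (α : ℝ) * |lam|)⁻¹ + 2 * Real.pi * M ^ 3 * |(β : ℝ)| * |lam|) := by
  refine ⟨(norm_integral_mul_exp_ofReal_mul_I_le zero_le_one hM _).trans (by nlinarith),
    fun hlam => ?_⟩
  have hα0 : (0 : ℝ) < α := by exact_mod_cast hα
  set a := 2 * Real.pi * α * lam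
  set b := 2 * Real.pi * β * lam
  have hphase : ∀ x : ℝ, 2 * Real.pi * ((α * x ^ 2 + β * x) * lam) = a * x ^ 2 + b * x :=
    fun x => by ring
  simp_rw [hphase]
  have ha : a ≠ 0 := by positivity
  have hquad := norm_integral_mul_exp_mul_sq_le ha 1 M
  have hlin := norm_integral_mul_exp_add_linear_sub_le zero_le_one hM
    (show Continuous fun x : ℝ => a * x ^ 2 by fun_prop) b
  calc _ ≤ |a|⁻¹ + |b| * M ^ 2 * (M - 1) := (norm_le_insert' _ _).trans (add_le_add hquad hlin)
    _ ≤ _ := by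
      simp only [a, b, abs_mul, abs_of_pos Real.pi_pos, abs_of_pos hα0, abs_two]
      nlinarith [mul_nonneg (mul_nonneg (abs_nonneg (β : ℝ)) (abs_nonneg lam)) Real.pi_pos.le]
end
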